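/- arXiv:1804.05829 — 2 statements merged into one kernel-verified Lean document; each statement's English description precedes it below -/
import Mathlib

section
/- Let n, d, ℓ be integers with 0 ≤ ℓ < d ≤ ⌊(n+ℓ−1)/2⌋. Then the graph H_{n,d,ℓ} is not ℓ-hamiltonian: more precisely, no linear forest F with ℓ edges contained in G[B] (the clique on the common neighborhood B) can be extended to a hamiltonian cycle of H_{n,d,ℓ}. -/
open SimpleGraph

/-- A linear forest: an acyclic graph with maximum degree at most 2. -/
def SimpleGraph.IsLinearForest {V : Type*} (F : SimpleGraph V) : Prop :=
  F.IsAcyclic ∧ ∀ v a b c : V, F.Adj v a → F.Adj v b → F.Adj v c → a = b ∨ a = c ∨ b = c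

/-- A graph is `ℓ`-hamiltonian if every linear forest with `ℓ` edges contained in it
extends to a hamiltonian cycle. -/
def SimpleGraph.IsLHamiltonian {V : Type*} [DecidableEq V] (G : SimpleGraph V) (ℓ : ℕ) : Prop :=
  ∀ F : SimpleGraph V, F ≤ G → F.IsLinearForest → F.edgeSet.ncard = ℓ →
    ∃ (v : V) (c : G.Walk v v), c.IsHamiltonianCycle ∧ ∀ e ∈ F.edgeSet, e ∈ c.edges

/-- The graph `H_{n,d,ℓ}`: a complete graph on `A = {0, …, n-d+ℓ-1}` together with `d-ℓ`
further vertices, each adjacent to the set `B = {0, …, d-1} ⊆ A`. -/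
def Hgraph (n d ℓ : ℕ) : SimpleGraph (Fin n) where
  Adj u v := u ≠ v ∧ ((u.val < n - d + ℓ ∧ v.val < n - d + ℓ) ∨
    (u.val < d ∧ n - d + ℓ ≤ v.val) ∨ (v.val < d ∧ n - d + ℓ ≤ u.val))
  symm := by constructor; intro u v h; exact ⟨h.1.symm, by tauto⟩
  loopless := by constructor; intro v h; exact h.1 rfl

/-- The graph `H'_{n,d,ℓ}`: a complete graph on `{0, …, n-d+ℓ-1}` and a complete graph on
`{n-d-1, …, n-1}` sharing `ℓ+1` vertices. -/
def H'graph (n d ℓ : ℕ) : SimpleGraph (Fin n) where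
  Adj u v := u ≠ v ∧ ((u.val < n - d + ℓ ∧ v.val < n - d + ℓ) ∨
    (n - d - 1 ≤ u.val ∧ n - d - 1 ≤ v.val))
  symm := by constructor; intro u v h; exact ⟨h.1.symm, by tauto⟩
  loopless := by constructor; intro v h; exact h.1 rfl

/-- `h_r(n,d,ℓ) = C(n-d+ℓ, r) + (d-ℓ) C(d, r-1)`. -/
def hrfun (n d r ℓ : ℕ) : ℕ := Nat.choose (n - d + ℓ) r + (d - ℓ) * Nat.choose d (r - 1)

/-- `h(n,d,ℓ) = C(n-d+ℓ, 2) + (d-ℓ) d`. -/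
def hfun (n d ℓ : ℕ) : ℕ := Nat.choose (n - d + ℓ) 2 + (d - ℓ) * d

/-- The number of `r`-cliques of `G`. -/
noncomputable def cliqueCount {V : Type*} (G : SimpleGraph V) (r : ℕ) : ℕ :=
  {s : Finset V | G.IsNClique r s}.ncard

/-- `G` is `ℓ`-saturated: not `ℓ`-hamiltonian, but adding any edge makes it `ℓ`-hamiltonian. -/
def SimpleGraph.IsLSaturated {V : Type*} [DecidableEq V] (G : SimpleGraph V) (ℓ : ℕ) : Prop :=
  ¬ G.IsLHamiltonian ℓ ∧
    ∀ u v : V, u ≠ v → ¬ G.Adj u v → (G ⊔ SimpleGraph.edge u v).IsLHamiltonian ℓ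

/-!
In a hamiltonian cycle every vertex is the tail of exactly one dart and the head of exactly one.
Let `B = {0, …, d-1}` and let `S` be the `d - ℓ` added vertices, whose neighbours all lie in `B`.
Exactly `|B| = d` darts of the cycle leave a vertex of `B`. At least `ℓ` of them end in `B` (one
per edge of `F`) and `|S| = d - ℓ` of them end in `S`, so none ends in `A \ B`. Hence the cycle
never leaves `B ∪ S`, contradicting that it passes through the vertex `d ∈ A \ B`.
-/

open Finset

theorem card_filter_toFinset_eq_of_count_map_eq_one {α β : Type*} [DecidableEq α]
    [DecidableEq β] {l : List α} {f : α → β} (hl : ∀ b, (l.map f).count b = 1)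
    (s : Finset β) : #{a ∈ l.toFinset | f a ∈ s} = #s := by
  refine Finset.card_nbij f (fun a ha => (Finset.mem_filter.mp ha).2) ?_ ?_
  · intro a ha a' ha' h
    simp only [Finset.coe_filter, List.mem_toFinset, Set.mem_ofPred_eq] at ha ha'
    exact List.inj_on_of_nodup_map (List.nodup_iff_count_le_one.mpr fun b => (hl b).le)
      ha.1 ha'.1 h
  · intro b hb
    obtain ⟨a, ha, rfl⟩ := List.mem_map.mp (List.count_pos_iff.mp (hl b ▸ Nat.one_pos))
    exact ⟨a, by simpa [ha] using hb, rfl⟩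

namespace SimpleGraph.Walk

variable {V : Type*} {G : SimpleGraph V}

/-- Tails and heads of the darts are `support.dropLast` and `support.tail`: both are the support of
the closed walk with one copy of `v` removed. -/
theorem map_fst_darts_perm_map_snd_darts {v : V} (c : G.Walk v v) :
    (c.darts.map (·.fst)).Perm (c.darts.map (·.snd)) := by
  rw [map_fst_darts, map_snd_darts, ← List.perm_cons v]
  exact (List.perm_append_singleton v _).symm.trans
    (by rw [dropLast_support_concat, cons_tail_support])

theorem exists_boundary_dart_of_mem_support [DecidableEq V] {v x y : V} (c : G.Walk v v)
    (T : Set V) (hx : x ∈ c.support) (hy : y ∈ c.support) (hxT : x ∈ T) (hyT : y ∉ T) :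
    ∃ dt ∈ c.darts, dt.fst ∈ T ∧ dt.snd ∉ T := by
  by_cases hv : v ∈ T
  · obtain ⟨dt, hdt, hdT⟩ := (c.takeUntil y hy).exists_boundary_dart T hv hyT
    exact ⟨dt, c.darts_takeUntil_subset_darts hy hdt, hdT⟩
  · obtain ⟨dt, hdt, hdT⟩ := (c.dropUntil x hx).exists_boundary_dart T hxT hv
    exact ⟨dt, c.darts_dropUntil_subset_darts hx hdt, hdT⟩

theorem ncard_edgeSet_le_card_darts_of_support_subset [DecidableEq V] {u v : V}
    (p : G.Walk u v) {F : SimpleGraph V} {B : Finset V} (hFp : ∀ e ∈ F.edgeSet, e ∈ p.edges)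
    (hFB : ∀ x ∈ F.support, x ∈ B) :
    F.edgeSet.ncard ≤ #{dt ∈ p.darts.toFinset | dt.fst ∈ B ∧ dt.snd ∈ B} := by
  set X := {dt ∈ p.darts.toFinset | dt.fst ∈ B ∧ dt.snd ∈ B}
  have hsub : F.edgeSet ⊆ Dart.edge '' (X : Set G.Dart) := by
    intro e he
    obtain ⟨dt, hdt, rfl⟩ := List.mem_map.mp (hFp e he)
    have hadj : F.Adj dt.fst dt.snd := he
    exact ⟨dt, by simp [X, hdt, hFB _ ⟨_, hadj⟩, hFB _ ⟨_, hadj.symm⟩], rfl⟩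
  calc F.edgeSet.ncard ≤ (Dart.edge '' (X : Set G.Dart)).ncard :=
        Set.ncard_le_ncard hsub ((X.finite_toSet).image _)
    _ ≤ (X : Set G.Dart).ncard := Set.ncard_image_le X.finite_toSet
    _ = #X := Set.ncard_coe_finset X

namespace IsHamiltonianCycle

variable [DecidableEq V] {v : V} {c : G.Walk v v}

theorem count_map_snd_darts (hc : c.IsHamiltonianCycle) (x : V) :
    (c.darts.map (·.snd)).count x = 1 := by
  rw [map_snd_darts, ← support_tail_of_not_nil c hc.isCycle.not_nil]
  exact hc.isHamiltonian_tail x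

theorem count_map_fst_darts (hc : c.IsHamiltonianCycle) (x : V) :
    (c.darts.map (·.fst)).count x = 1 :=
  (c.map_fst_darts_perm_map_snd_darts.count_eq x).trans (hc.count_map_snd_darts x)

theorem snd_mem_of_fst_mem (hc : c.IsHamiltonianCycle) {B S : Finset V} (hBS : Disjoint B S)
    (hS : ∀ x ∈ S, ∀ y, G.Adj x y → y ∈ B)
    (hcard : #B ≤ #S + #{dt ∈ c.darts.toFinset | dt.fst ∈ B ∧ dt.snd ∈ B})
    {dt : G.Dart} (hdt : dt ∈ c.darts) (hfst : dt.fst ∈ B) : dt.snd ∈ B ∪ S := by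
  set D := c.darts.toFinset
  have hsub : {dt ∈ D | dt.fst ∈ B ∧ dt.snd ∈ B} ∪ {dt ∈ D | dt.snd ∈ S} ⊆
      {dt ∈ D | dt.fst ∈ B} := by
    intro dt hdt
    simp only [Finset.mem_union, Finset.mem_filter] at hdt ⊢
    rcases hdt with ⟨hD, hfst, -⟩ | ⟨hD, hsnd⟩
    · exact ⟨hD, hfst⟩
    · exact ⟨hD, hS _ hsnd _ dt.adj.symm⟩
  have hdisj : Disjoint {dt ∈ D | dt.fst ∈ B ∧ dt.snd ∈ B} {dt ∈ D | dt.snd ∈ S} :=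
    Finset.disjoint_filter.mpr fun _ _ h => Finset.disjoint_left.mp hBS h.2
  have heq := Finset.eq_of_subset_of_card_le hsub (by
    rw [Finset.card_union_of_disjoint hdisj,
      card_filter_toFinset_eq_of_count_map_eq_one hc.count_map_fst_darts,
      card_filter_toFinset_eq_of_count_map_eq_one hc.count_map_snd_darts]
    omega)
  have hmem : dt ∈ {dt ∈ D | dt.fst ∈ B} := by simp [D, hdt, hfst]
  rw [← heq] at hmem
  simp only [Finset.mem_union, Finset.mem_filter] at hmem ⊢
  tauto

theorem card_add_card_darts_lt (hc : c.IsHamiltonianCycle) {B S : Finset V}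
    (hBS : Disjoint B S) (hS : ∀ x ∈ S, ∀ y, G.Adj x y → y ∈ B) (hB : B.Nonempty)
    {w : V} (hw : w ∉ B ∪ S) :
    #S + #{dt ∈ c.darts.toFinset | dt.fst ∈ B ∧ dt.snd ∈ B} < #B := by
  by_contra! hcard
  obtain ⟨x, hx⟩ := hB
  obtain ⟨dt, hdt, hfst, hsnd⟩ := c.exists_boundary_dart_of_mem_support ↑(B ∪ S)
    (hc.mem_support x) (hc.mem_support w) (by simp [hx]) (by simpa using hw)
  rw [Finset.mem_coe, Finset.mem_union] at hfst
  rcases hfst with hfst | hfst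
  · exact hsnd (hc.snd_mem_of_fst_mem hBS hS hcard hdt hfst)
  · exact hsnd (Finset.mem_union_left _ (hS _ hfst _ dt.adj))

end IsHamiltonianCycle

end SimpleGraph.Walk

namespace SimpleGraph

theorem IsLinearForest.anti {V : Type*} {F F' : SimpleGraph V} (h : F ≤ F')
    (hF' : F'.IsLinearForest) : F.IsLinearForest :=
  ⟨hF'.1.anti h, fun v a b c ha hb hc => hF'.2 v a b c (h ha) (h hb) (h hc)⟩

theorem pathGraph_isAcyclic (n : ℕ) : (pathGraph n).IsAcyclic := by
  refine isAcyclic_iff_forall_adj_isBridge.mpr fun u v huv => ?_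
  wlog h : u.val + 1 = v.val generalizing u v
  · rw [Sym2.eq_swap]
    exact this v u huv.symm (by rw [pathGraph_adj] at huv; omega)
  refine isBridge_iff.mpr fun ⟨p⟩ => ?_
  obtain ⟨dt, -, hfst, hsnd⟩ := p.exists_boundary_dart {x : Fin n | x ≤ u} (le_refl u)
    (show ¬ v ≤ u by rw [Fin.le_def]; omega)
  obtain ⟨hadj, hne⟩ := dt.adj
  simp only [Set.mem_ofPred_eq, Fin.le_def, not_le] at hfst hsnd
  rw [pathGraph_adj] at hadj
  have hu : dt.fst = u := Fin.ext (by omega)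
  have hv : dt.snd = v := Fin.ext (by omega)
  exact hne (by simp [hu, hv, huv.ne])

theorem pathGraph_isLinearForest (n : ℕ) : (pathGraph n).IsLinearForest := by
  refine ⟨pathGraph_isAcyclic n, fun v a b c ha hb hc => ?_⟩
  rw [pathGraph_adj] at ha hb hc
  simp only [Fin.ext_iff]
  omega

theorem exists_le_pathGraph_ncard_edgeSet_eq {n ℓ : ℕ} (hℓ : ℓ < n) :
    ∃ F : SimpleGraph (Fin n), F ≤ pathGraph n ∧ F.edgeSet.ncard = ℓ ∧
      ∀ x ∈ F.support, x.val ≤ ℓ := by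
  set f : Fin ℓ → Sym2 (Fin n) := fun i => s(⟨i, by omega⟩, ⟨i + 1, by omega⟩)
  have hf : Function.Injective f := fun i j h => by
    simp only [f, Sym2.eq_iff, Fin.ext_iff] at h
    omega
  have hdiag : Disjoint (Set.range f) Sym2.diagSet := Set.disjoint_left.mpr fun _ ⟨i, hi⟩ h => by
    simp [← hi, f, Fin.ext_iff] at h
  refine ⟨fromEdgeSet (Set.range f), fun x y h => ?_, ?_, fun x ⟨y, h⟩ => ?_⟩
  · obtain ⟨⟨i, hi⟩, -⟩ := (fromEdgeSet_adj _).mp h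
    simp only [f, Sym2.eq_iff, Fin.ext_iff] at hi
    rw [pathGraph_adj]
    omega
  · rw [edgeSet_fromEdgeSet, hdiag.sdiff_eq_left, Set.ncard_range_of_injective hf,
      Nat.card_eq_fintype_card, Fintype.card_fin]
  · obtain ⟨⟨i, hi⟩, -⟩ := (fromEdgeSet_adj _).mp h
    simp only [f, Sym2.eq_iff, Fin.ext_iff] at hi
    omega

end SimpleGraph

theorem Hgraph_adj_lt_of_le {n d ℓ : ℕ} (hdm : d ≤ n - d + ℓ) {x y : Fin n}
    (hx : n - d + ℓ ≤ x.val) (h : (Hgraph n d ℓ).Adj x y) : y.val < d := by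
  obtain ⟨-, h | h | h⟩ := h <;> omega

theorem Hgraph_not_exists_isHamiltonianCycle {n d ℓ : ℕ} (hld : ℓ < d) (hdm : d < n - d + ℓ)
    (F : SimpleGraph (Fin n)) (hcard : F.edgeSet.ncard = ℓ) (hFB : ∀ v ∈ F.support, v.val < d) :
    ¬ ∃ (v : Fin n) (c : (Hgraph n d ℓ).Walk v v), c.IsHamiltonianCycle ∧
      ∀ e ∈ F.edgeSet, e ∈ c.edges := by
  rintro ⟨v, c, hc, hFc⟩
  set B := Iio (⟨d, by omega⟩ : Fin n)
  set S := Ici (⟨n - d + ℓ, by omega⟩ : Fin n)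
  have hBS : Disjoint B S := disjoint_left.mpr fun x hB hS => by
    simp only [B, S, mem_Iio, mem_Ici, Fin.lt_def, Fin.le_def] at hB hS
    omega
  have hS : ∀ x ∈ S, ∀ y, (Hgraph n d ℓ).Adj x y → y ∈ B := fun x hx y hxy => by
    simp only [B, S, mem_Iio, mem_Ici, Fin.lt_def, Fin.le_def] at hx ⊢
    exact Hgraph_adj_lt_of_le hdm.le hx hxy
  have hlt := hc.card_add_card_darts_lt hBS hS ⟨⟨0, by omega⟩, by simp [B, Fin.lt_def]; omega⟩
    (w := ⟨d, by omega⟩) (by simp [B, S, Fin.le_def]; omega)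
  have hle := c.ncard_edgeSet_le_card_darts_of_support_subset hFc (B := B)
    (fun x hx => by simpa [B, Fin.lt_def] using hFB x hx)
  have hcardB : #B = d := Fin.card_Iio _
  have hcardS : #S = n - (n - d + ℓ) := Fin.card_Ici _
  omega

/-- `H_{n,d,ℓ}` is not `ℓ`-hamiltonian; more precisely, no linear forest with `ℓ` edges contained
in the clique on `B = {0,…,d-1}` extends to a hamiltonian cycle of `H_{n,d,ℓ}`. -/
theorem Hgraph_not_lHamiltonian {n d ℓ : ℕ} (hld : ℓ < d) (hd : d ≤ (n + ℓ - 1) / 2) :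
    ¬ (Hgraph n d ℓ).IsLHamiltonian ℓ ∧
    ∀ F : SimpleGraph (Fin n), F ≤ Hgraph n d ℓ → F.IsLinearForest → F.edgeSet.ncard = ℓ →
      (∀ v ∈ F.support, v.val < d) →
      ¬ ∃ (v : Fin n) (c : (Hgraph n d ℓ).Walk v v), c.IsHamiltonianCycle ∧
          ∀ e ∈ F.edgeSet, e ∈ c.edges := by
  have hdm : d < n - d + ℓ := by omega
  refine ⟨fun hHam => ?_, fun F _ _ => Hgraph_not_exists_isHamiltonianCycle hld hdm F⟩
  obtain ⟨P, hP, hcard, hPℓ⟩ := exists_le_pathGraph_ncard_edgeSet_eq (n := n) (ℓ := ℓ) (by omega)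
  have hPH : P ≤ Hgraph n d ℓ := fun x y hxy =>
    ⟨hxy.ne, Or.inl ⟨by linarith [hPℓ x ⟨y, hxy⟩], by linarith [hPℓ y ⟨x, hxy.symm⟩]⟩⟩
  exact Hgraph_not_exists_isHamiltonianCycle hld hdm P hcard
    (fun x hx => by linarith [hPℓ x hx]) (hHam P hPH ((pathGraph_isLinearForest n).anti hP) hcard)
end

section
/- Let G be an n-vertex simple graph that is not ℓ-hamiltonian, and let u, v be nonadjacent vertices of G with deg(u) + deg(v) ≥ n + ℓ. Then the graph G + uv obtained by adding the edge uv is also not ℓ-hamiltonian. -/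
open SimpleGraph

/-!
If a hamiltonian cycle of `G + uv` through a set `S` of edges of `G` uses `uv`, deleting `uv`
leaves a hamiltonian path `v = P₀, P₁, …, Pₙ₋₁ = u` of `G` through `S`. Among the `n - 1`
positions `i`, at least `deg u + deg v - (n - 1) ≥ |S| + 1` satisfy `u ~ Pᵢ` and `v ~ Pᵢ₊₁`,
so for one of them the edge `PᵢPᵢ₊₁` is not in `S`, and `u Pᵢ Pᵢ₋₁ … P₀ Pᵢ₊₁ … Pₙ₋₁` is a
hamiltonian cycle of `G` through `S`. So `G` extends every linear forest that `G + uv` extends.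
-/

open Finset

namespace SimpleGraph

namespace Walk

variable {V : Type*} {G : SimpleGraph V} {u v : V}

lemma IsTrail.injOn_mk_getVert {P : G.Walk u v} (hP : P.IsTrail) :
    Set.InjOn (fun i => s(P.getVert i, P.getVert (i + 1))) {i | i < P.length} := by
  intro i hi j hj hij
  simp only [Set.mem_ofPred_eq] at hi hj hij
  rw [← getElem_edges (by simpa using hi), ← getElem_edges (by simpa using hj)] at hij
  exact hP.edges_nodup.getElem_inj_iff.mp hij

lemma mem_edgeSet_of_mem_edges_sup_edge {x y : V} {p : (G ⊔ edge u v).Walk x y}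
    {e : Sym2 V} (he : e ∈ p.edges) (hne : e ≠ s(u, v)) : e ∈ G.edgeSet := by
  have := p.edges_subset_edgeSet he
  rw [edgeSet_sup] at this
  exact this.resolve_right fun h => hne (edgeSet_edge_subset h)

lemma IsCycle.snd_eq_or_penultimate_eq_of_mem_edges {c : G.Walk u u} (hc : c.IsCycle)
    (h : s(u, v) ∈ c.edges) : c.snd = v ∨ c.penultimate = v := by
  obtain ⟨i, hi, he⟩ := c.mk_mem_edges_iff_exists.mp h
  rcases Sym2.eq_iff.mp he with ⟨hu, rfl⟩ | ⟨rfl, hu⟩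
  · rcases (hc.getVert_endpoint_iff hi.le).mp hu with rfl | rfl
    · exact .inl rfl
    · omega
  · rcases (hc.getVert_endpoint_iff hi).mp hu with h0 | hl
    · omega
    · exact .inr (by rw [penultimate, show c.length - 1 = i by omega])

variable [DecidableEq V]

lemma IsHamiltonianCycle.reverse {c : G.Walk u u} (hc : c.IsHamiltonianCycle) :
    c.reverse.IsHamiltonianCycle := by
  have := hc.finite
  cases nonempty_fintype V
  rw [isHamiltonianCycle_iff_isCycle_and_length_eq] at hc ⊢
  exact ⟨hc.1.reverse, by rw [length_reverse, hc.2]⟩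

lemma IsHamiltonianCycle.exists_isHamiltonian_perm_edges {c : G.Walk u u}
    (hc : c.IsHamiltonianCycle) (h : s(u, v) ∈ c.edges) :
    ∃ P : G.Walk v u, P.IsHamiltonian ∧ (s(u, v) :: P.edges).Perm c.edges := by
  have of_snd : ∀ c : G.Walk u u, c.IsHamiltonianCycle → c.snd = v →
      ∃ P : G.Walk v u, P.IsHamiltonian ∧ s(u, v) :: P.edges = c.edges := by
    rintro c hc rfl
    refine ⟨c.tail, hc.isHamiltonian_tail, ?_⟩
    conv_rhs => rw [← c.cons_tail_eq hc.not_nil]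
    rw [edges_cons]
  rcases hc.isCycle.snd_eq_or_penultimate_eq_of_mem_edges h with h | h
  · obtain ⟨P, hP, hPc⟩ := of_snd c hc h
    exact ⟨P, hP, hPc ▸ .refl _⟩
  · obtain ⟨P, hP, hPc⟩ := of_snd c.reverse hc.reverse (by rw [snd_reverse, h])
    exact ⟨P, hP, by rw [hPc, edges_reverse]; exact List.reverse_perm _⟩

lemma IsHamiltonian.transfer {H : SimpleGraph V} {P : G.Walk u v} (hP : P.IsHamiltonian)
    (hPH : ∀ e ∈ P.edges, e ∈ H.edgeSet) : (P.transfer H hPH).IsHamiltonian := by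
  intro a
  rw [support_transfer]
  exact hP a

lemma IsHamiltonianCycle.transfer {H : SimpleGraph V} {c : G.Walk u u}
    (hc : c.IsHamiltonianCycle) (hcH : ∀ e ∈ c.edges, e ∈ H.edgeSet) :
    (c.transfer H hcH).IsHamiltonianCycle := by
  rw [isHamiltonianCycle_iff_isCycle_and_support_count_tail_eq_one, support_transfer] at *
  exact ⟨hc.1.transfer hcH, hc.2⟩

lemma IsHamiltonian.isHamiltonianCycle_cons {P : G.Walk v u} (hP : P.IsHamiltonian)
    (h : G.Adj u v) (hlen : 2 ≤ P.length) : (cons h P).IsHamiltonianCycle := by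
  rw [isHamiltonianCycle_isCycle_and_isHamiltonian_tail, isCycle_iff_isPath_tail_and_le_length]
  refine ⟨⟨by simpa using hP.isPath, by simp; omega⟩, fun a => by simpa using hP a⟩

lemma IsHamiltonian.exists_isHamiltonianCycle_of_crossing {P : G.Walk v u}
    (hP : P.IsHamiltonian) (huv : ¬ G.Adj u v) {i : ℕ} (hi : i < P.length)
    (hu : G.Adj u (P.getVert i)) (hv : G.Adj v (P.getVert (i + 1))) :
    ∃ c : G.Walk u u, c.IsHamiltonianCycle ∧
      ∀ e ∈ P.edges, e ≠ s(P.getVert i, P.getVert (i + 1)) → e ∈ c.edges := by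
  set Q := (P.take i).reverse.append (cons hv (P.drop (i + 1)))
  have hQ : Q.IsHamiltonian := by
    have hsupp : Q.support.Perm P.support := by
      rw [support_append, support_reverse, support_cons, List.tail_cons, support_take,
        drop_support_eq_support_drop_min, min_eq_left (by omega)]
      exact ((List.reverse_perm _).append_right _).trans (by rw [List.take_append_drop])
    intro a
    rw [hsupp.count_eq]
    exact hP a
  have hlen : 2 ≤ Q.length := by
    have : P.length ≠ 1 := by
      rintro h1
      obtain rfl : i = 0 := by omega
      exact huv (by simpa using hu)
    simp only [Q, length_append, length_reverse, take_length, length_cons, drop_length]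
    omega
  refine ⟨cons hu Q, hQ.isHamiltonianCycle_cons hu hlen, fun e he hne => ?_⟩
  rw [← List.take_append_drop i P.edges, List.drop_eq_getElem_cons (by simpa using hi),
    getElem_edges] at he
  simp only [Q, edges_cons, edges_append, edges_reverse, edges_take, edges_drop, List.mem_cons,
    List.mem_append, List.mem_reverse] at he ⊢
  tauto

end Walk

variable {V : Type*} [Fintype V] {G : SimpleGraph V} [DecidableRel G.Adj] {u v : V}

lemma degree_le_card_filter_adj {x : V} {s : Finset ℕ} (f : ℕ → V)
    (hf : ∀ w, G.Adj x w → ∃ i ∈ s, f i = w) :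
    G.degree x ≤ #(s.filter fun i => G.Adj x (f i)) := by
  classical
  rw [← card_neighborFinset_eq_degree]
  calc #(G.neighborFinset x)
      ≤ #((s.filter fun i => G.Adj x (f i)).image f) := by
        refine card_le_card fun w hw => ?_
        obtain ⟨i, hi, rfl⟩ := hf w ((G.mem_neighborFinset x w).mp hw)
        exact mem_image_of_mem f (mem_filter.mpr ⟨hi, (G.mem_neighborFinset x _).mp hw⟩)
    _ ≤ _ := card_image_le

variable [DecidableEq V]

lemma Walk.IsHamiltonian.exists_crossing_notMem {P : G.Walk v u} (hP : P.IsHamiltonian)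
    {S : Set (Sym2 V)} (hS : S.Finite)
    (hdeg : Fintype.card V + S.ncard ≤ G.degree u + G.degree v) :
    ∃ i < P.length, G.Adj u (P.getVert i) ∧ G.Adj v (P.getVert (i + 1)) ∧
      s(P.getVert i, P.getVert (i + 1)) ∉ S := by
  set A := (range P.length).filter fun i => G.Adj u (P.getVert i)
  set B := (range P.length).filter fun i => G.Adj v (P.getVert (i + 1))
  have hA : G.degree u ≤ #A := by
    refine degree_le_card_filter_adj _ fun w huw => ?_
    obtain ⟨i, rfl, hi⟩ := mem_support_iff_exists_getVert.mp (hP.mem_support w)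
    refine ⟨i, mem_range.mpr (lt_of_le_of_ne hi ?_), rfl⟩
    rintro rfl
    exact huw.ne (P.getVert_length).symm
  have hB : G.degree v ≤ #B := by
    refine degree_le_card_filter_adj (fun i => P.getVert (i + 1)) fun w hvw => ?_
    obtain ⟨i, rfl, hi⟩ := mem_support_iff_exists_getVert.mp (hP.mem_support w)
    have : i ≠ 0 := by
      rintro rfl
      exact hvw.ne (P.getVert_zero).symm
    exact ⟨i - 1, mem_range.mpr (by omega), by rw [Nat.sub_add_cancel (by omega)]⟩
  have hAB : S.ncard < #(A ∩ B) := by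
    have hunion : #(A ∪ B) ≤ P.length :=
      (card_le_card (union_subset (filter_subset _ _) (filter_subset _ _))).trans_eq
        (card_range _)
    have := card_union_add_card_inter A B
    have := hP.length_eq
    have : 0 < Fintype.card V := Fintype.card_pos_iff.mpr ⟨u⟩
    omega
  by_contra! hall
  refine hAB.not_ge (Set.ncard_coe_finset (A ∩ B) ▸
    Set.ncard_le_ncard_of_injOn (fun i => s(P.getVert i, P.getVert (i + 1))) ?_ ?_ hS)
  · intro i hi
    simp only [A, B, coe_inter, coe_filter, mem_range, Set.mem_inter_iff, Set.mem_ofPred_eq] at hi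
    exact hall i hi.1.1 hi.1.2 hi.2.2
  · refine hP.isPath.isTrail.injOn_mk_getVert.mono fun i hi => ?_
    simp only [A, B, coe_inter, coe_filter, mem_range, Set.mem_inter_iff, Set.mem_ofPred_eq] at hi
    exact hi.1.1

theorem Walk.IsHamiltonian.exists_isHamiltonianCycle_of_degree {P : G.Walk v u}
    (hP : P.IsHamiltonian) (huv : ¬ G.Adj u v) {S : Set (Sym2 V)} (hS : ∀ e ∈ S, e ∈ P.edges)
    (hdeg : Fintype.card V + S.ncard ≤ G.degree u + G.degree v) :
    ∃ c : G.Walk u u, c.IsHamiltonianCycle ∧ ∀ e ∈ S, e ∈ c.edges := by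
  obtain ⟨i, hi, hu, hv, hiS⟩ := hP.exists_crossing_notMem (P.edges.finite_toSet.subset hS) hdeg
  obtain ⟨c, hc, hPc⟩ := hP.exists_isHamiltonianCycle_of_crossing huv hi hu hv
  exact ⟨c, hc, fun e he => hPc e (hS e he) (ne_of_mem_of_not_mem he hiS)⟩

theorem exists_isHamiltonianCycle_of_sup_edge (huv : ¬ G.Adj u v) {S : Set (Sym2 V)}
    (hSG : S ⊆ G.edgeSet) (hdeg : Fintype.card V + S.ncard ≤ G.degree u + G.degree v) {w : V}
    {c : (G ⊔ edge u v).Walk w w} (hc : c.IsHamiltonianCycle) (hSc : ∀ e ∈ S, e ∈ c.edges) :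
    ∃ (x : V) (c' : G.Walk x x), c'.IsHamiltonianCycle ∧ ∀ e ∈ S, e ∈ c'.edges := by
  have hS_ne : ∀ e ∈ S, e ≠ s(u, v) := fun e he h => huv (by simpa [h] using hSG he)
  by_cases huvc : s(u, v) ∈ c.edges
  · have hu := hc.mem_support u
    have hrot := c.rotate_edges u hu
    obtain ⟨P, hP, hperm⟩ := (hc.rotate hu).exists_isHamiltonian_perm_edges
      (hrot.mem_iff.mpr huvc)
    have hPnodup : (s(u, v) :: P.edges).Nodup :=
      hperm.nodup_iff.mpr (hc.rotate hu).isCycle.edges_nodup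
    have hPG : ∀ e ∈ P.edges, e ∈ G.edgeSet := fun e he =>
      Walk.mem_edgeSet_of_mem_edges_sup_edge he
        (ne_of_mem_of_not_mem he (List.nodup_cons.mp hPnodup).1)
    refine ⟨u, (hP.transfer hPG).exists_isHamiltonianCycle_of_degree huv (fun e he => ?_) hdeg⟩
    rw [Walk.edges_transfer]
    have := hperm.mem_iff.mpr (hrot.mem_iff.mpr (hSc e he))
    exact (List.mem_cons.mp this).resolve_left (hS_ne e he)
  · have hcG : ∀ e ∈ c.edges, e ∈ G.edgeSet := fun e he =>
      Walk.mem_edgeSet_of_mem_edges_sup_edge he (ne_of_mem_of_not_mem he huvc)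
    exact ⟨w, c.transfer G hcG, hc.transfer hcG, by simpa using hSc⟩

end SimpleGraph

theorem addEdge_not_lHamiltonian_general {n ℓ : ℕ} (G : SimpleGraph (Fin n)) [DecidableRel G.Adj]
    (hham : ¬ G.IsLHamiltonian ℓ) (u v : Fin n) (hadj : ¬ G.Adj u v)
    (hdeg : n + ℓ ≤ G.degree u + G.degree v) :
    ¬ (G ⊔ SimpleGraph.edge u v).IsLHamiltonian ℓ := by
  intro h
  refine hham fun F hFG hF hFcard => ?_
  obtain ⟨w, c, hc, hFc⟩ := h F (hFG.trans le_sup_left) hF hFcard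
  exact exists_isHamiltonianCycle_of_sup_edge hadj (edgeSet_mono hFG)
    (by simpa [hFcard] using hdeg) hc hFc

/-- If `G` is not `ℓ`-hamiltonian and `u, v` are nonadjacent vertices with
`deg u + deg v ≥ n + ℓ`, then `G + uv` is not `ℓ`-hamiltonian either. -/
theorem addEdge_not_lHamiltonian {n ℓ : ℕ} (G : SimpleGraph (Fin n)) [DecidableRel G.Adj]
    (hham : ¬ G.IsLHamiltonian ℓ) (u v : Fin n) (huv : u ≠ v) (hadj : ¬ G.Adj u v)
    (hdeg : n + ℓ ≤ G.degree u + G.degree v) :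
    ¬ (G ⊔ SimpleGraph.edge u v).IsLHamiltonian ℓ :=
  addEdge_not_lHamiltonian_general G hham u v hadj hdeg
end
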